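/- Under the stated assumptions, if 0 < h < min{ b(l_{2ε}) − b(l_ε), b(r_ε) − b(r_{2ε}) }, then sup_{w ∈ b(I_ε)} |𝔟_h⁻¹(w) − b⁻¹(w)| ≤ h · ‖(b⁻¹)'‖_{∞, b(I_{2ε})} · ∫_{−∞}^{∞} |y| K(y) dy. In particular the left-hand side is at most (h/m_b) ∫ |y| K(y) dy. -/

import Mathlib

/-! Writing the inner integral as the tail `∫_{(w - b z)/h}^∞ K` and swapping the two integrals,
the `z`-integral measures the superlevel set `{z ∈ I_{2ε} : b z ≥ w - h y} = [l_{2ε}, b⁻¹(w - h y)]`.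
Hence `𝔟_h⁻¹(w) = ∫ K(y) b⁻¹(w - h y) dy` is a kernel smoothing of `b⁻¹`, the bandwidth condition
keeping `w - h y` inside `b(I_{2ε})` for `|y| ≤ 1`. Since `∫ K = 1`, the error is
`∫ K(y) (b⁻¹(w - h y) - b⁻¹(w)) dy`, which the mean value theorem bounds by
`h ‖(b⁻¹)'‖_∞ ∫ |y| K(y) dy`; and `(b⁻¹)' = 1 / (b' ∘ b⁻¹)` gives `‖(b⁻¹)'‖_∞ ≤ 1 / m_b`. -/

open MeasureTheory

/-- The rescaled kernel `K_η(x) = η⁻¹ K(x/η)`. -/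
noncomputable def Kh (K : ℝ → ℝ) (η x : ℝ) : ℝ := η⁻¹ * K (x / η)

/-- The (deterministic) approximation
`𝔟_h⁻¹(w) = l₀ - 2ε + ∫_{I_{2ε}} ∫_{-∞}^{-w} K_h(-b(z) - y) dy dz` of `b⁻¹`. -/
noncomputable def binvApprox (K : ℝ → ℝ) (l₀ r₀ ε h : ℝ) (b : ℝ → ℝ) (w : ℝ) : ℝ :=
  (l₀ - 2 * ε) +
    ∫ z in Set.Icc (l₀ - 2 * ε) (r₀ + 2 * ε), ∫ y in Set.Iic (-w), Kh K h (-(b z) - y)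

open Set Function

theorem le_biSup_of_forall_le {ι α : Type*} [ConditionallyCompleteLattice α] {f : ι → α}
    {s : Set ι} {C : α} (hC : ∀ i ∈ s, f i ≤ C) {i : ι} (hi : i ∈ s) : f i ≤ ⨆ j ∈ s, f j :=
  le_ciSup₂ (f := fun j _ => f j) ⟨C, by
    rintro _ ⟨_, ⟨j, rfl⟩, ⟨hj, rfl⟩⟩
    exact hC j hj⟩ i hi

theorem sub_mul_mem_Icc {a c h w y : ℝ} (hh : 0 ≤ h) (hw : w ∈ Icc (a + h) (c - h))
    (hy : y ∈ Icc (-1) 1) : w - h * y ∈ Icc a c :=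
  ⟨by nlinarith [hw.1, hy.2], by nlinarith [hw.2, hy.1]⟩

theorem StrictAntiOn.Icc_inter_preimage_Ici {b : ℝ → ℝ} {l r x : ℝ}
    (hb : StrictAntiOn b (Icc l r)) (hx : x ∈ Icc l r) :
    Icc l r ∩ b ⁻¹' Ici (b x) = Icc l x := by
  ext z
  simp only [mem_inter_iff, mem_preimage, mem_Ici, mem_Icc]
  constructor
  · rintro ⟨hz, hbz⟩
    exact ⟨hz.1, (hb.le_iff_ge hx hz).1 hbz⟩
  · rintro ⟨hlz, hzx⟩
    have hz : z ∈ Icc l r := ⟨hlz, hzx.trans hx.2⟩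
    exact ⟨hz, (hb.le_iff_ge hx hz).2 hzx⟩

theorem abs_le_inv_of_leftInvOn {b binv : ℝ → ℝ} {s : Set ℝ} {b' binv' m v : ℝ}
    (hs : UniqueDiffWithinAt ℝ s v) (hv : v ∈ s) (hinv : LeftInvOn b binv s)
    (hb : HasDerivAt b b' (binv v)) (hbinv : HasDerivAt binv binv' v) (hm : 0 < m)
    (hb' : b' ≤ -m) : |binv'| ≤ m⁻¹ := by
  have hcomp : HasDerivWithinAt id (b' * binv') s v :=
    (hb.comp v hbinv).hasDerivWithinAt.congr (fun u hu => (hinv hu).symm) (hinv hv).symm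
  have hone : b' * binv' = 1 := hs.eq_deriv _ hcomp (hasDerivWithinAt_id v s)
  calc |binv'| = m⁻¹ * (m * |binv'|) := by field_simp
    _ ≤ m⁻¹ * (|b'| * |binv'|) := by gcongr; exact le_abs.2 (Or.inr (by linarith))
    _ = m⁻¹ := by rw [← abs_mul, hone, abs_one, mul_one]

theorem strictAntiOn_of_hasDerivAt_le_neg {b b' : ℝ → ℝ} {s : Set ℝ} {m : ℝ} (hs : Convex ℝ s)
    (hbd : ∀ x ∈ s, HasDerivAt b (b' x) x) (hb' : ∀ x ∈ s, b' x ≤ -m) (hm : 0 < m) :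
    StrictAntiOn b s :=
  strictAntiOn_of_hasDerivWithinAt_neg hs (fun x hx => (hbd x hx).continuousAt.continuousWithinAt)
    (fun x hx => (hbd x (interior_subset hx)).hasDerivWithinAt)
    (fun x hx => (hb' x (interior_subset hx)).trans_lt (neg_neg_of_pos hm))

theorem integrable_mul_of_support_subset_Icc {K f : ℝ → ℝ} {a c : ℝ} (hK : Continuous K)
    (hKsupp : support K ⊆ Icc a c) (hf : ContinuousOn f (Icc a c)) :
    Integrable fun y => K y * f y :=
  (integrableOn_iff_integrable_of_support_subset
    ((support_mul_subset_left _ _).trans hKsupp)).1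
    ((hK.continuousOn.mul hf).integrableOn_compact isCompact_Icc)

theorem abs_integral_mul_sub_le {K f : ℝ → ℝ} {c C : ℝ} (hK0 : ∀ y, 0 ≤ K y) (hK : Integrable K)
    (hKint : ∫ y, K y = 1) (hKf : Integrable fun y => K y * f y)
    (hyK : Integrable fun y => |y| * K y) (hf : ∀ y ∈ support K, |f y - c| ≤ C * |y|) :
    |(∫ y, K y * f y) - c| ≤ C * ∫ y, |y| * K y := by
  have hKfc : Integrable fun y => K y * (f y - c) := by
    simp_rw [mul_sub]
    exact hKf.sub (hK.mul_const c)
  calc |(∫ y, K y * f y) - c| = |∫ y, K y * (f y - c)| := by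
        simp_rw [mul_sub]
        rw [integral_sub hKf (hK.mul_const c), integral_mul_const, hKint, one_mul]
    _ ≤ ∫ y, |K y * (f y - c)| := abs_integral_le_integral_abs
    _ ≤ ∫ y, C * (|y| * K y) := by
        refine integral_mono hKfc.abs (hyK.const_mul C) fun y => ?_
        rw [abs_mul, abs_of_nonneg (hK0 y)]
        by_cases hy : K y = 0
        · simp [hy]
        · calc K y * |f y - c| ≤ K y * (C * |y|) := mul_le_mul_of_nonneg_left (hf y hy) (hK0 y)
            _ = C * (|y| * K y) := by ring
    _ = C * ∫ y, |y| * K y := integral_const_mul C _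

theorem setIntegral_Iic_Kh_sub_eq (K : ℝ → ℝ) {h : ℝ} (hh : 0 < h) (c w : ℝ) :
    ∫ y in Iic (-w), Kh K h (-c - y) = ∫ x in Ici ((w - c) / h), K x := by
  have hsub := (Measure.measurePreserving_sub_left volume (-c)).setIntegral_image_emb
    (MeasurableEquiv.subLeft (-c)).measurableEmbedding (Kh K h) (Iic (-w))
  rw [image_const_sub_Iic, show -c - -w = w - c by ring] at hsub
  rw [← hsub, integral_Ici_eq_integral_Ioi, integral_Ici_eq_integral_Ioi]
  simp only [Kh, div_eq_inv_mul]
  rw [integral_const_mul, integral_comp_mul_left_Ioi K _ (inv_pos.2 hh), inv_inv, smul_eq_mul,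
    ← mul_assoc, inv_mul_cancel₀ hh.ne', one_mul]

theorem setIntegral_setIntegral_Ici_eq {K g : ℝ → ℝ} {s : Set ℝ} (hK : Integrable K)
    (hs : IsCompact s) (hg : ContinuousOn g s) :
    ∫ z in s, ∫ y in Ici (g z), K y = ∫ y, K y * volume.real (s ∩ g ⁻¹' Iic y) := by
  have hclosed : ∀ y, IsClosed (s ∩ g ⁻¹' Iic y) := fun y =>
    hg.preimage_isClosed_of_isClosed hs.isClosed isClosed_Iic
  have : IsFiniteMeasure (volume.restrict s) := isFiniteMeasure_restrict.2 hs.measure_lt_top.ne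
  have hint : Integrable (uncurry fun z y => (Ici (g z)).indicator K y)
      ((volume.restrict s).prod volume) := by
    have hT : IsClosed (s ×ˢ univ ∩ (fun p : ℝ × ℝ => p.2 - g p.1) ⁻¹' Ici 0) :=
      ((continuous_snd.continuousOn).sub (hg.comp continuous_fst.continuousOn
        fun p hp => hp.1)).preimage_isClosed_of_isClosed (hs.isClosed.prod isClosed_univ)
        isClosed_Ici
    refine (hK.comp_snd _).norm.mono' ?_ (Filter.Eventually.of_forall fun p => ?_)
    · refine ((hK.1.comp_snd).indicator hT.measurableSet).congr ?_
      filter_upwards [Measure.quasiMeasurePreserving_fst.ae (ae_restrict_mem hs.measurableSet)]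
        with ⟨z, y⟩ hz
      by_cases hzy : g z ≤ y
      · simp [hz, hzy]
      · simp [hzy]
    · exact norm_indicator_le_norm_self _ _
  simp_rw [← integral_indicator measurableSet_Ici]
  rw [integral_integral_swap hint]
  refine integral_congr_ae (Filter.Eventually.of_forall fun y => ?_)
  calc ∫ z in s, (Ici (g z)).indicator K y
      = ∫ z in s, (s ∩ g ⁻¹' Iic y).indicator (fun _ => K y) z := by
        refine setIntegral_congr_fun hs.measurableSet fun z hz => ?_
        by_cases hzy : g z ≤ y
        · simp [hz, hzy]
        · simp [hzy]
    _ = K y * volume.real (s ∩ g ⁻¹' Iic y) := by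
        rw [integral_indicator_const _ (hclosed y).measurableSet,
          measureReal_restrict_apply (hclosed y).measurableSet, inter_eq_left.2 inter_subset_left,
          smul_eq_mul, mul_comm]

theorem add_setIntegral_Kh_eq_integral_mul {K b binv : ℝ → ℝ} {l r h w : ℝ} (hK : Continuous K)
    (hKsupp : support K ⊆ Icc (-1) 1) (hKint : ∫ y, K y = 1)
    (hb : StrictAntiOn b (Icc l r)) (hbc : ContinuousOn b (Icc l r))
    (hbinv : ∀ v ∈ Icc (b r) (b l), binv v ∈ Icc l r ∧ b (binv v) = v)
    (hbinvc : ContinuousOn binv (Icc (b r) (b l)))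
    (hh : 0 < h) (hw : ∀ y ∈ Icc (-1) 1, w - h * y ∈ Icc (b r) (b l)) :
    l + ∫ z in Icc l r, ∫ y in Iic (-w), Kh K h (-(b z) - y) = ∫ y, K y * binv (w - h * y) := by
  have hKi : Integrable K := hK.integrable_of_hasCompactSupport
    (HasCompactSupport.of_support_subset_isCompact isCompact_Icc hKsupp)
  have hKf : Integrable fun y => K y * binv (w - h * y) :=
    integrable_mul_of_support_subset_Icc hK hKsupp
      (hbinvc.comp (by fun_prop) hw)
  have hlevel : ∀ y ∈ Icc (-1) 1,
      volume.real (Icc l r ∩ (fun z => (w - b z) / h) ⁻¹' Iic y) = binv (w - h * y) - l := by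
    intro y hy
    obtain ⟨hmem, hbinv_eq⟩ := hbinv _ (hw y hy)
    have : (fun z => (w - b z) / h) ⁻¹' Iic y = b ⁻¹' Ici (b (binv (w - h * y))) := by
      ext z
      simp only [mem_preimage, mem_Iic, mem_Ici, hbinv_eq, div_le_iff₀ hh]
      constructor <;> intro <;> linarith
    rw [this, hb.Icc_inter_preimage_Ici hmem, Real.volume_real_Icc_of_le hmem.1]
  calc l + ∫ z in Icc l r, ∫ y in Iic (-w), Kh K h (-(b z) - y)
      = l + ∫ z in Icc l r, ∫ x in Ici ((w - b z) / h), K x := by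
        simp_rw [setIntegral_Iic_Kh_sub_eq K hh]
    _ = l + ∫ y, K y * volume.real (Icc l r ∩ (fun z => (w - b z) / h) ⁻¹' Iic y) := by
        rw [setIntegral_setIntegral_Ici_eq (g := fun z => (w - b z) / h) hKi isCompact_Icc
          ((continuousOn_const.sub hbc).div_const h)]
    _ = l + ∫ y, K y * (binv (w - h * y) - l) := by
        congr 1
        refine integral_congr_ae (Filter.Eventually.of_forall fun y => ?_)
        by_cases hy : y ∈ Icc (-1) 1
        · simp only [hlevel y hy]
        · simp [notMem_support.1 (mt (@hKsupp y) hy)]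
    _ = ∫ y, K y * binv (w - h * y) := by
        simp_rw [mul_sub]
        rw [integral_sub hKf (hKi.mul_const l), integral_mul_const, hKint]
        ring

theorem abs_add_setIntegral_Kh_sub_le {K b binv binv' : ℝ → ℝ} {l r h w M : ℝ}
    (hK0 : ∀ y, 0 ≤ K y) (hK : Continuous K) (hKsupp : support K ⊆ Icc (-1) 1)
    (hKint : ∫ y, K y = 1) (hb : StrictAntiOn b (Icc l r)) (hbc : ContinuousOn b (Icc l r))
    (hbinv : ∀ v ∈ Icc (b r) (b l), binv v ∈ Icc l r ∧ b (binv v) = v)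
    (hbinvd : ∀ v ∈ Icc (b r) (b l), HasDerivAt binv (binv' v) v)
    (hM : ∀ v ∈ Icc (b r) (b l), |binv' v| ≤ M) (hh : 0 < h) (hw : w ∈ Icc (b r + h) (b l - h)) :
    |(l + ∫ z in Icc l r, ∫ y in Iic (-w), Kh K h (-(b z) - y)) - binv w| ≤
      h * M * ∫ y, |y| * K y := by
  have hbinvc : ContinuousOn binv (Icc (b r) (b l)) := fun v hv =>
    (hbinvd v hv).continuousAt.continuousWithinAt
  have hwy : ∀ y ∈ Icc (-1) 1, w - h * y ∈ Icc (b r) (b l) := fun y hy =>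
    sub_mul_mem_Icc hh.le hw hy
  rw [add_setIntegral_Kh_eq_integral_mul hK hKsupp hKint hb hbc hbinv hbinvc hh hwy]
  refine abs_integral_mul_sub_le hK0
    (hK.integrable_of_hasCompactSupport
      (HasCompactSupport.of_support_subset_isCompact isCompact_Icc hKsupp)) hKint
    (integrable_mul_of_support_subset_Icc hK hKsupp (hbinvc.comp (by fun_prop) hwy))
    (by simpa only [mul_comm] using
      integrable_mul_of_support_subset_Icc hK hKsupp continuous_abs.continuousOn)
    fun y hy => ?_
  have hmvt := (convex_Icc (b r) (b l)).norm_image_sub_le_of_norm_hasDerivWithin_le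
    (fun v hv => (hbinvd v hv).hasDerivWithinAt) hM (x := w)
    ⟨by linarith [hw.1], by linarith [hw.2]⟩ (hwy y (hKsupp hy))
  rw [Real.norm_eq_abs, Real.norm_eq_abs, sub_sub_cancel_left, abs_neg, abs_mul,
    abs_of_pos hh] at hmvt
  linarith

theorem stmt5_general (l₀ r₀ ε mb : ℝ) (K b b' binv binv' : ℝ → ℝ)
    (hmb : 0 < mb)
    -- kernel assumptions
    (hK0 : ∀ y, 0 ≤ K y) (hK2 : ContDiff ℝ 2 K)
    (hKsupp : ∀ y, 1 < |y| → K y = 0) (hKint : ∫ y, K y = 1)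
    -- `b` is continuously differentiable on `I_{2ε}` with `b' ≤ -mb` there
    (hbd : ∀ x ∈ Set.Icc (l₀ - 2 * ε) (r₀ + 2 * ε), HasDerivAt b (b' x) x)
    (hb'le : ∀ x ∈ Set.Icc (l₀ - 2 * ε) (r₀ + 2 * ε), b' x ≤ -mb)
    -- `binv` is the inverse of `b`, differentiable on `b(I_{2ε})` with derivative `binv'`
    (hbinvmem : ∀ w ∈ Set.Icc (b (r₀ + 2 * ε)) (b (l₀ - 2 * ε)),
      binv w ∈ Set.Icc (l₀ - 2 * ε) (r₀ + 2 * ε) ∧ b (binv w) = w)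
    (hbinvd : ∀ w ∈ Set.Icc (b (r₀ + 2 * ε)) (b (l₀ - 2 * ε)), HasDerivAt binv (binv' w) w)
    -- the bandwidth condition
    (h : ℝ) (hh0 : 0 < h)
    (hh : h < min (b (l₀ - 2 * ε) - b (l₀ - ε)) (b (r₀ + ε) - b (r₀ + 2 * ε))) :
    (∀ w ∈ Set.Icc (b (r₀ + ε)) (b (l₀ - ε)),
      |binvApprox K l₀ r₀ ε h b w - binv w| ≤
        h * (⨆ v ∈ Set.Icc (b (r₀ + 2 * ε)) (b (l₀ - 2 * ε)), |binv' v|) *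
          ∫ y, |y| * K y) ∧
    (∀ w ∈ Set.Icc (b (r₀ + ε)) (b (l₀ - ε)),
      |binvApprox K l₀ r₀ ε h b w - binv w| ≤ (h / mb) * ∫ y, |y| * K y) := by
  set l := l₀ - 2 * ε
  set r := r₀ + 2 * ε
  have hKsupp' : support K ⊆ Icc (-1) 1 := fun y hy => abs_le.1 (not_lt.1 (mt (hKsupp y) hy))
  have hb : StrictAntiOn b (Icc l r) :=
    strictAntiOn_of_hasDerivAt_le_neg (convex_Icc l r) hbd hb'le hmb
  have key : ∀ w ∈ Icc (b (r₀ + ε)) (b (l₀ - ε)), |binvApprox K l₀ r₀ ε h b w - binv w| ≤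
      h * (⨆ v ∈ Icc (b r) (b l), |binv' v|) * ∫ y, |y| * K y ∧
      ⨆ v ∈ Icc (b r) (b l), |binv' v| ≤ mb⁻¹ := by
    intro w hw
    have hwindow : w ∈ Icc (b r + h) (b l - h) :=
      ⟨by linarith [hw.1, min_le_right (b l - b (l₀ - ε)) (b (r₀ + ε) - b r)],
        by linarith [hw.2, min_le_left (b l - b (l₀ - ε)) (b (r₀ + ε) - b r)]⟩
    have hderiv : ∀ v ∈ Icc (b r) (b l), |binv' v| ≤ mb⁻¹ := fun v hv =>
      abs_le_inv_of_leftInvOn (uniqueDiffOn_Icc (by linarith [hwindow.1, hwindow.2]) v hv) hv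
        (fun u hu => (hbinvmem u hu).2) (hbd _ (hbinvmem v hv).1) (hbinvd v hv) hmb
        (hb'le _ (hbinvmem v hv).1)
    refine ⟨abs_add_setIntegral_Kh_sub_le hK0 hK2.continuous hKsupp' hKint hb
      (fun x hx => (hbd x hx).continuousAt.continuousWithinAt) hbinvmem hbinvd
      (fun v hv => le_biSup_of_forall_le hderiv hv) hh0 hwindow, ?_⟩
    exact Real.iSup_le (fun v => Real.iSup_le (hderiv v) (inv_nonneg.2 hmb.le))
      (inv_nonneg.2 hmb.le)
  refine ⟨fun w hw => (key w hw).1, fun w hw => (key w hw).1.trans ?_⟩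
  rw [div_eq_mul_inv]
  gcongr
  · exact integral_nonneg fun y => mul_nonneg (abs_nonneg y) (hK0 y)
  · exact (key w hw).2

/-- Lemma 5.1: uniform bound on `b(I_ε)` for `𝔟_h⁻¹ - b⁻¹`. -/
theorem stmt5 (l₀ r₀ ε mb : ℝ) (K b b' binv binv' : ℝ → ℝ)
    (hlr : l₀ < r₀) (hε : 0 < ε) (hε1 : ε ≤ 1) (hmb : 0 < mb)
    -- kernel assumptions
    (hK0 : ∀ y, 0 ≤ K y) (hK2 : ContDiff ℝ 2 K) (hKsymm : ∀ y, K (-y) = K y)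
    (hKsupp : ∀ y, 1 < |y| → K y = 0) (hKint : ∫ y, K y = 1)
    -- `b` is continuously differentiable on `I_{2ε}` with `b' ≤ -mb` there
    (hbd : ∀ x ∈ Set.Icc (l₀ - 2 * ε) (r₀ + 2 * ε), HasDerivAt b (b' x) x)
    (hb'c : ContinuousOn b' (Set.Icc (l₀ - 2 * ε) (r₀ + 2 * ε)))
    (hb'le : ∀ x ∈ Set.Icc (l₀ - 2 * ε) (r₀ + 2 * ε), b' x ≤ -mb)
    -- `binv` is the inverse of `b`, differentiable on `b(I_{2ε})` with derivative `binv'`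
    (hbinv : ∀ x ∈ Set.Icc (l₀ - 2 * ε) (r₀ + 2 * ε), binv (b x) = x)
    (hbinvmem : ∀ w ∈ Set.Icc (b (r₀ + 2 * ε)) (b (l₀ - 2 * ε)),
      binv w ∈ Set.Icc (l₀ - 2 * ε) (r₀ + 2 * ε) ∧ b (binv w) = w)
    (hbinvd : ∀ w ∈ Set.Icc (b (r₀ + 2 * ε)) (b (l₀ - 2 * ε)), HasDerivAt binv (binv' w) w)
    -- the bandwidth condition
    (h : ℝ) (hh0 : 0 < h)
    (hh : h < min (b (l₀ - 2 * ε) - b (l₀ - ε)) (b (r₀ + ε) - b (r₀ + 2 * ε))) :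
    (∀ w ∈ Set.Icc (b (r₀ + ε)) (b (l₀ - ε)),
      |binvApprox K l₀ r₀ ε h b w - binv w| ≤
        h * (⨆ v ∈ Set.Icc (b (r₀ + 2 * ε)) (b (l₀ - 2 * ε)), |binv' v|) *
          ∫ y, |y| * K y) ∧
    (∀ w ∈ Set.Icc (b (r₀ + ε)) (b (l₀ - ε)),
      |binvApprox K l₀ r₀ ε h b w - binv w| ≤ (h / mb) * ∫ y, |y| * K y) :=
  stmt5_general l₀ r₀ ε mb K b b' binv binv' hmb hK0 hK2 hKsupp hKint hbd hb'le hbinvmem hbinvd h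
    hh0 hh
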